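/- arXiv:1711.02054 — 5 statements merged into one kernel-verified Lean document; each statement's English description precedes it below -/
import Mathlib

section
/- Let A, B ≥ 0 and σ*, σ be real numbers with 0 ≤ σ ≤ σ* and σ* > 0, and suppose σ*·B ≤ A (the critical-value inequality). Set κ = σ/σ* and β = 1/(1+κ). Then A + σ*·B ≤ (1 + (σ* − σ)·β/σ*)·A + ((1−β)(σ* − σ) + σ)·B, and moreover the ratio of the coefficient of B to the coefficient of A in the right-hand side equals σ, so that A + σ*·B ≤ (2/(1+κ))·(A + σ·B). -/
/-- Key algebraic step (3.11) in the proof of Theorem 3.1. -/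
theorem stmt_1 (A B σ σs : ℝ) (hA : 0 ≤ A) (hB : 0 ≤ B)
    (hσ0 : 0 ≤ σ) (hσs : 0 < σs) (hσσ : σ ≤ σs) (hcrit : σs * B ≤ A) :
    (A + σs * B ≤ (1 + (σs - σ) * ((1 : ℝ) / (1 + σ / σs)) / σs) * A +
        ((1 - (1 : ℝ) / (1 + σ / σs)) * (σs - σ) + σ) * B) ∧
    (((1 - (1 : ℝ) / (1 + σ / σs)) * (σs - σ) + σ) /
        (1 + (σs - σ) * ((1 : ℝ) / (1 + σ / σs)) / σs) = σ) ∧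
    (A + σs * B ≤ (2 / (1 + σ / σs)) * (A + σ * B)) := by
  have hs : (0:ℝ) < σs + σ := by linarith
  have h1 : 1 + σ / σs = (σs + σ) / σs := by field_simp
  have hβ : (1 : ℝ) / (1 + σ / σs) = σs / (σs + σ) := by
    rw [h1, one_div_div]
  have hcA : 1 + (σs - σ) * ((1 : ℝ) / (1 + σ / σs)) / σs = 2 * σs / (σs + σ) := by
    rw [hβ]; field_simp; ring
  have hcB : (1 - (1 : ℝ) / (1 + σ / σs)) * (σs - σ) + σ = σ * (2 * σs / (σs + σ)) := by
    rw [hβ]; field_simp; ring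
  have hmain : A + σs * B ≤ 2 * σs / (σs + σ) * A + σ * (2 * σs / (σs + σ)) * B := by
    have key : (A + σs * B) * (σs + σ) ≤ 2 * σs * A + σ * (2 * σs) * B := by
      nlinarith [mul_nonneg (sub_nonneg.2 hσσ) (sub_nonneg.2 hcrit)]
    calc A + σs * B = (A + σs * B) * (σs + σ) / (σs + σ) := by field_simp
      _ ≤ (2 * σs * A + σ * (2 * σs) * B) / (σs + σ) := by gcongr
      _ = 2 * σs / (σs + σ) * A + σ * (2 * σs / (σs + σ)) * B := by ring
  refine ⟨by rw [hcA, hcB]; exact hmain, ?_, ?_⟩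
  · rw [hcA, hcB]
    have hne : (2 * σs / (σs + σ)) ≠ 0 := by positivity
    exact mul_div_cancel_right₀ σ hne
  · have h2 : 2 / (1 + σ / σs) = 2 * σs / (σs + σ) := by
      rw [h1, div_div_eq_mul_div]
    rw [h2, mul_add]
    calc A + σs * B ≤ 2 * σs / (σs + σ) * A + σ * (2 * σs / (σs + σ)) * B := hmain
      _ = 2 * σs / (σs + σ) * A + 2 * σs / (σs + σ) * (σ * B) := by ring
end

section
/- Let Ω ⊂ ℝ^m be a bounded domain with smooth boundary, u ∈ H¹₀(Ω) the weak solution of −div(A∇u) + σu = f with f ∈ L²(Ω), σ = const ≥ 0, and A a symmetric matrix field with μ₁|ξ|² ≤ Aξ·ξ ≤ μ₂|ξ|². Let v ∈ H¹₀(Ω) be any approximation and σ* > 0 satisfy ‖u−v‖²_A / ‖u−v‖²_{L²(Ω)} ≥ σ*. Then for any z ∈ H(Ω, div), if 0 ≤ σ ≤ σ*: |||v−u|||² ≤ (2/(1+σ/σ*)) · ( ‖A∇v + z‖²_{A^{-1}} + (1/σ*)·‖f − σv − div z‖²_{L²(Ω)} ), where |||w|||² = ‖w‖²_A + σ‖w‖²_{L²(Ω)}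 and ‖w‖²_A = ∫_Ω ∇w·A∇w. -/
/-!
Write `e = v - u`, `y = A∇v + z` and `r = f - σv - div z`. Testing the weak formulation with `e`
and integrating `z` by parts gives the error identity `|||e|||² = (y, ∇e) - (r, e)`. By the
Cauchy–Schwarz inequality in the energy inner product and in `L²`,
`|||e|||² ≤ ‖y‖_{A⁻¹} ‖∇e‖_A + ‖r‖ ‖e‖`, and Young's inequality with the weights `σ*/(σ*+σ)` and
`1/(σ*+σ)` reduces the claim to `(σ* + σ) (‖∇e‖²_A + σ* ‖e‖²) ≤ 2σ* |||e|||²`, which is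
`(σ* - σ) (‖∇e‖²_A - σ* ‖e‖²) ≥ 0`.
-/

open Real

namespace LinearMap.IsPositive

variable {E : Type*} [NormedAddCommGroup E] [InnerProductSpace ℝ E] {T : E →ₗ[ℝ] E}

theorem inner_sq_le (hT : T.IsPositive) (x y : E) :
    inner ℝ (T x) y ^ 2 ≤ inner ℝ (T x) x * inner ℝ (T y) y := by
  have hdiscrim : discrim (inner ℝ (T y) y) (2 * inner ℝ (T x) y) (inner ℝ (T x) x) ≤ 0 := by
    refine discrim_le_zero fun t => ?_
    have h := hT.inner_nonneg_left (x + t • y)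
    have hyx : inner ℝ (T y) x = inner ℝ (T x) y := by
      rw [hT.isSymmetric, real_inner_comm]
    simp only [map_add, map_smul, inner_add_left, inner_add_right, real_inner_smul_left,
      real_inner_smul_right, hyx] at h
    linarith
  rw [discrim] at hdiscrim
  linarith

theorem inner_nonneg_of_rightInverse (hT : T.IsPositive) {S : E →ₗ[ℝ] E}
    (hTS : ∀ y, T (S y) = y) (y : E) : 0 ≤ inner ℝ (S y) y := by
  simpa only [hTS] using hT.inner_nonneg_right (S y)

theorem inner_le_sqrt_mul_sqrt (hT : T.IsPositive) {S : E →ₗ[ℝ] E}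
    (hTS : ∀ y, T (S y) = y) (y ξ : E) :
    inner ℝ y ξ ≤ √(inner ℝ (S y) y) * √(inner ℝ (T ξ) ξ) := by
  have hCS := hT.inner_sq_le (S y) ξ
  rw [hTS, real_inner_comm (S y) y] at hCS
  rw [← sqrt_mul (hT.inner_nonneg_of_rightInverse hTS y)]
  exact (le_abs_self _).trans (abs_le_sqrt hCS)

end LinearMap.IsPositive

theorem sq_add_mul_sq_le_two_div_mul {σ σs p q ρ n : ℝ} (hσ0 : 0 ≤ σ) (hσs : 0 < σs)
    (hσσ : σ ≤ σs) (hcrit : σs * n ^ 2 ≤ q ^ 2) (h : q ^ 2 + σ * n ^ 2 ≤ p * q + ρ * n) :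
    q ^ 2 + σ * n ^ 2 ≤ 2 / (1 + σ / σs) * (p ^ 2 + 1 / σs * ρ ^ 2) := by
  have hD : 0 < σs + σ := by positivity
  have hrhs :
      2 / (1 + σ / σs) * (p ^ 2 + 1 / σs * ρ ^ 2) = 2 * (σs * p ^ 2 + ρ ^ 2) / (σs + σ) := by
    field_simp
  have hcomp : (σs + σ) * (q ^ 2 + σs * n ^ 2) ≤ 2 * σs * (q ^ 2 + σ * n ^ 2) := by
    nlinarith [mul_nonneg (sub_nonneg.2 hσσ) (sub_nonneg.2 hcrit)]
  rw [hrhs, le_div_iff₀ hD]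
  nlinarith [sq_nonneg (2 * σs * p - (σs + σ) * q), sq_nonneg (2 * ρ - (σs + σ) * n),
    mul_le_mul_of_nonneg_left h (by positivity : (0 : ℝ) ≤ σs * (σs + σ)),
    mul_le_mul_of_nonneg_left hcomp hD.le]

theorem energy_error_eq {L W : Type*} [NormedAddCommGroup L] [InnerProductSpace ℝ L]
    [NormedAddCommGroup W] [InnerProductSpace ℝ W]
    (grad : L →ₗ[ℝ] W) (dvg : W →ₗ[ℝ] L) (A : W →ₗ[ℝ] W) (σ : ℝ) (f u v : L) (z : W)
    (hweak : ∀ φ : L, inner ℝ (A (grad u)) (grad φ) + σ * inner ℝ u φ = inner ℝ f φ)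
    (hibp : ∀ φ : L, inner ℝ z (grad φ) = -inner ℝ (dvg z) φ) :
    inner ℝ (A (grad (v - u))) (grad (v - u)) + σ * ‖v - u‖ ^ 2 =
      inner ℝ (A (grad v) + z) (grad (v - u)) - inner ℝ (f - σ • v - dvg z) (v - u) := by
  have hu := hweak (v - u)
  have hz := hibp (v - u)
  rw [← real_inner_self_eq_norm_sq]
  simp only [map_sub, inner_sub_left, inner_sub_right, inner_add_left,
    real_inner_smul_left] at hu hz ⊢
  linarith

theorem stmt_3_general {L W : Type*} [NormedAddCommGroup L] [InnerProductSpace ℝ L]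
    [NormedAddCommGroup W] [InnerProductSpace ℝ W]
    (grad : L →ₗ[ℝ] W) (dvg : W →ₗ[ℝ] L)
    (A Ainv : W →ₗ[ℝ] W)
    (hAsymm : ∀ ξ η : W, (inner ℝ (A ξ) η : ℝ) = (inner ℝ ξ (A η) : ℝ))
    (μ₁ : ℝ) (hμ₁ : 0 < μ₁)
    (hAlow : ∀ ξ : W, μ₁ * ‖ξ‖ ^ 2 ≤ (inner ℝ (A ξ) ξ : ℝ))
    (hAinv : ∀ ξ : W, A (Ainv ξ) = ξ ∧ Ainv (A ξ) = ξ)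
    (σ σs : ℝ) (hσ0 : 0 ≤ σ) (hσs : 0 < σs) (hσσ : σ ≤ σs)
    (f u v : L) (z : W)
    -- u is the weak solution of −div(A∇u) + σu = f
    (hweak : ∀ φ : L, (inner ℝ (A (grad u)) (grad φ) : ℝ) + σ * (inner ℝ u φ : ℝ)
        = (inner ℝ f φ : ℝ))
    -- integration by parts for z ∈ H(Ω, div)
    (hibp : ∀ φ : L, (inner ℝ z (grad φ) : ℝ) = -(inner ℝ (dvg z) φ : ℝ))
    -- the critical-value inequality ‖u−v‖²_A / ‖u−v‖²_{L²} ≥ σ*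
    (hcrit : σs * ‖u - v‖ ^ 2 ≤ (inner ℝ (A (grad (u - v))) (grad (u - v)) : ℝ)) :
    (inner ℝ (A (grad (v - u))) (grad (v - u)) : ℝ) + σ * ‖v - u‖ ^ 2 ≤
      (2 / (1 + σ / σs)) *
        ((inner ℝ (Ainv (A (grad v) + z)) (A (grad v) + z) : ℝ) +
          (1 / σs) * ‖f - σ • v - dvg z‖ ^ 2) := by
  have hA : A.IsPositive :=
    A.isPositive_iff.2 ⟨hAsymm, fun ξ => (by positivity : 0 ≤ μ₁ * ‖ξ‖ ^ 2).trans (hAlow ξ)⟩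
  have hAAinv : ∀ ξ, A (Ainv ξ) = ξ := fun ξ => (hAinv ξ).1
  have hcrit' : σs * ‖v - u‖ ^ 2 ≤ inner ℝ (A (grad (v - u))) (grad (v - u)) := by
    rwa [← neg_sub u v, map_neg, map_neg, inner_neg_neg, norm_neg]
  have hflux := hA.inner_le_sqrt_mul_sqrt hAAinv (A (grad v) + z) (grad (v - u))
  have hres := real_inner_le_norm (-(f - σ • v - dvg z)) (v - u)
  rw [inner_neg_left, norm_neg] at hres
  have hQe := hA.inner_nonneg_left (grad (v - u))
  have hQy := hA.inner_nonneg_of_rightInverse hAAinv (A (grad v) + z)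
  have key := sq_add_mul_sq_le_two_div_mul
    (p := √(inner ℝ (Ainv (A (grad v) + z)) (A (grad v) + z))) (ρ := ‖f - σ • v - dvg z‖)
    (n := ‖v - u‖) hσ0 hσs hσσ (by rwa [sq_sqrt hQe])
    (by rw [sq_sqrt hQe, energy_error_eq grad dvg A σ f u v z hweak hibp]; linarith)
  rwa [sq_sqrt hQe, sq_sqrt hQy] at key

/-- Theorem 3.1 (modified Aubin a posteriori majorant), case 0 ≤ σ ≤ σ*.
Abstract functional-analytic formalization: `L` plays the role of `L²(Ω)` (scalar
functions), `W` the role of `(L²(Ω))^m` (vector fields), `grad : H¹₀ → L²` is the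
gradient, `dvg` the divergence of fields in `H(Ω,div)` (integration by parts is a
hypothesis), `A` and `Ainv` the symmetric coefficient matrix and its inverse. -/
theorem stmt_3 {L W : Type*} [NormedAddCommGroup L] [InnerProductSpace ℝ L]
    [NormedAddCommGroup W] [InnerProductSpace ℝ W]
    (grad : L →ₗ[ℝ] W) (dvg : W →ₗ[ℝ] L)
    (A Ainv : W →ₗ[ℝ] W)
    (hAsymm : ∀ ξ η : W, (inner ℝ (A ξ) η : ℝ) = (inner ℝ ξ (A η) : ℝ))
    (μ₁ μ₂ : ℝ) (hμ₁ : 0 < μ₁) (hμ₂ : 0 < μ₂)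
    (hAlow : ∀ ξ : W, μ₁ * ‖ξ‖ ^ 2 ≤ (inner ℝ (A ξ) ξ : ℝ))
    (hAup : ∀ ξ : W, (inner ℝ (A ξ) ξ : ℝ) ≤ μ₂ * ‖ξ‖ ^ 2)
    (hAinv : ∀ ξ : W, A (Ainv ξ) = ξ ∧ Ainv (A ξ) = ξ)
    (σ σs : ℝ) (hσ0 : 0 ≤ σ) (hσs : 0 < σs) (hσσ : σ ≤ σs)
    (f u v : L) (z : W)
    -- u is the weak solution of −div(A∇u) + σu = f
    (hweak : ∀ φ : L, (inner ℝ (A (grad u)) (grad φ) : ℝ) + σ * (inner ℝ u φ : ℝ)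
        = (inner ℝ f φ : ℝ))
    -- integration by parts for z ∈ H(Ω, div)
    (hibp : ∀ φ : L, (inner ℝ z (grad φ) : ℝ) = -(inner ℝ (dvg z) φ : ℝ))
    -- the critical-value inequality ‖u−v‖²_A / ‖u−v‖²_{L²} ≥ σ*
    (hcrit : σs * ‖u - v‖ ^ 2 ≤ (inner ℝ (A (grad (u - v))) (grad (u - v)) : ℝ)) :
    (inner ℝ (A (grad (v - u))) (grad (v - u)) : ℝ) + σ * ‖v - u‖ ^ 2 ≤
      (2 / (1 + σ / σs)) *
        ((inner ℝ (Ainv (A (grad v) + z)) (A (grad v) + z) : ℝ) +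
          (1 / σs) * ‖f - σ • v - dvg z‖ ^ 2) :=
  stmt_3_general grad dvg A Ainv hAsymm μ₁ hμ₁ hAlow hAinv σ σs hσ0 hσs hσσ f u v z hweak hibp hcrit
end

section
/- Let Ω ⊂ ℝ^m be a bounded domain, u ∈ H¹₀(Ω) the weak solution of −Δu + σu = f with σ > 0 constant and f ∈ L²(Ω), and v ∈ H¹(Ω) with v = u on ∂Ω. Then for any z ∈ (L²(Ω))^m with div z ∈ L²(Ω): ‖∇(v−u)‖²_{L²(Ω)} + σ‖v−u‖²_{L²(Ω)} ≤ ‖∇v + z‖²_{L²(Ω)} + (1/σ)·‖f − σv − div z‖²_{L²(Ω)}. -/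
/-!
Testing the weak formulation with the error `e = v - u` and integrating `z` by parts expresses
the energy `‖∇e‖² + σ‖e‖²` as `⟪∇v + z, ∇e⟫ - ⟪f - σv - div z, e⟫`. Young's inequality, with
weight `σ` on the second pairing, bounds this by half of the majorant plus half of the energy.
-/

open scoped InnerProductSpace

theorem two_mul_real_inner_le_add_mul_sq {E : Type*} [NormedAddCommGroup E]
    [InnerProductSpace ℝ E] {ε : ℝ} (hε : 0 < ε) (x y : E) :
    2 * ⟪x, y⟫_ℝ ≤ ε * ‖x‖ ^ 2 + ε⁻¹ * ‖y‖ ^ 2 :=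
  calc 2 * ⟪x, y⟫_ℝ ≤ 2 * ‖x‖ * ‖y‖ := by
        rw [mul_assoc]; exact mul_le_mul_of_nonneg_left (real_inner_le_norm x y) two_pos.le
    _ ≤ ε * ‖x‖ ^ 2 + ε⁻¹ * ‖y‖ ^ 2 := two_mul_le_add_mul_sq hε

theorem sq_norm_add_mul_sq_norm_le_of_eq_inner_sub_inner {L W : Type*}
    [NormedAddCommGroup L] [InnerProductSpace ℝ L] [NormedAddCommGroup W] [InnerProductSpace ℝ W]
    {σ : ℝ} (hσ : 0 < σ) {a g : W} {e s : L}
    (h : ‖a‖ ^ 2 + σ * ‖e‖ ^ 2 = ⟪g, a⟫_ℝ - ⟪s, e⟫_ℝ) :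
    ‖a‖ ^ 2 + σ * ‖e‖ ^ 2 ≤ ‖g‖ ^ 2 + σ⁻¹ * ‖s‖ ^ 2 := by
  have young_grad := two_mul_real_inner_le_add_mul_sq one_pos g a
  have young_val := two_mul_real_inner_le_add_mul_sq (inv_pos.mpr hσ) (-s) e
  rw [inner_neg_left, norm_neg, inv_inv] at young_val
  rw [inv_one] at young_grad
  linarith

section WeakSolution

variable {L W : Type*} [NormedAddCommGroup L] [InnerProductSpace ℝ L]
  [NormedAddCommGroup W] [InnerProductSpace ℝ W]
  {grad : L →ₗ[ℝ] W} {dvg : W →ₗ[ℝ] L} {σ : ℝ} {f u : L} {z : W}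

theorem energy_pairing_eq_residual
    (hweak : ∀ φ : L, ⟪grad u, grad φ⟫_ℝ + σ * ⟪u, φ⟫_ℝ = ⟪f, φ⟫_ℝ)
    (hibp : ∀ φ : L, ⟪z, grad φ⟫_ℝ = -⟪dvg z, φ⟫_ℝ) (v φ : L) :
    ⟪grad (v - u), grad φ⟫_ℝ + σ * ⟪v - u, φ⟫_ℝ
      = ⟪grad v + z, grad φ⟫_ℝ - ⟪f - σ • v - dvg z, φ⟫_ℝ := by
  simp only [map_sub, inner_sub_left, inner_add_left, real_inner_smul_left]
  linarith [hweak φ, hibp φ]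

end WeakSolution

/-- Aubin's a posteriori error majorant (Theorem 2.1, simplified case A = I,
Γ_D = ∂Ω). Abstract formalization: `L` is `L²(Ω)`, `W` is `(L²(Ω))^m`,
`grad` is the gradient on `H¹` (the weak form is tested with v − u ∈ H¹₀,
encoded by quantifying over all test functions), `dvg` is the divergence. -/
theorem stmt_4 {L W : Type*} [NormedAddCommGroup L] [InnerProductSpace ℝ L]
    [NormedAddCommGroup W] [InnerProductSpace ℝ W]
    (grad : L →ₗ[ℝ] W) (dvg : W →ₗ[ℝ] L)
    (σ : ℝ) (hσ : 0 < σ) (f u v : L) (z : W)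
    -- u is the weak solution of −Δu + σu = f
    (hweak : ∀ φ : L, (inner ℝ (grad u) (grad φ) : ℝ) + σ * (inner ℝ u φ : ℝ)
        = (inner ℝ f φ : ℝ))
    -- integration by parts for z ∈ H(Ω, div) against v − u ∈ H¹₀
    (hibp : ∀ φ : L, (inner ℝ z (grad φ) : ℝ) = -(inner ℝ (dvg z) φ : ℝ)) :
    ‖grad (v - u)‖ ^ 2 + σ * ‖v - u‖ ^ 2 ≤
      ‖grad v + z‖ ^ 2 + (1 / σ) * ‖f - σ • v - dvg z‖ ^ 2 := by
  have energy_eq : ‖grad (v - u)‖ ^ 2 + σ * ‖v - u‖ ^ 2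
      = ⟪grad v + z, grad (v - u)⟫_ℝ - ⟪f - σ • v - dvg z, v - u⟫_ℝ := by
    rw [← energy_pairing_eq_residual hweak hibp v (v - u), real_inner_self_eq_norm_sq,
      real_inner_self_eq_norm_sq]
  rw [one_div]
  exact sq_norm_add_mul_sq_norm_le_of_eq_inner_sub_inner hσ energy_eq
end

section
/- Let Ω ⊂ ℝ² be a bounded convex domain, u ∈ H¹₀(Ω) the weak solution of −Δu = f with f ∈ L²(Ω), and v ∈ H¹₀(Ω). Then for every ε > 0 and every z ∈ (L²(Ω))² with div z ∈ L²(Ω): ‖∇(v−u)‖²_{L²(Ω)} ≤ (1+ε)·‖∇v + z‖²_{L²(Ω)} + c_Ω·(1 + 1/ε)·‖div z − f‖²_{L²(Ω)}, where c_Ω is the constant in the Friedrichs inequality ‖w‖²_{L²(Ω)} ≤ c_Ω·‖∇w‖²_{L²(Ω)} for w ∈ H¹₀(Ω). -/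
/-!
Testing the weak formulation with the error `w = v - u` and integrating `z` by parts gives the
error identity `‖∇w‖² = ⟪∇v + z, ∇w⟫ + ⟪div z - f, w⟫`. Cauchy–Schwarz together with the
Friedrichs inequality `‖w‖ ≤ √c_Ω ‖∇w‖` turns it into `‖∇w‖ ≤ ‖∇v + z‖ + √c_Ω ‖div z - f‖`,
and squaring with Young's inequality `2ab ≤ εa² + b²/ε` gives the majorant.
-/

open RealInnerProductSpace

lemma add_sq_le_one_add_mul_sq_add {a b ε : ℝ} (hε : 0 < ε) :
    (a + b) ^ 2 ≤ (1 + ε) * a ^ 2 + (1 + 1 / ε) * b ^ 2 :=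
  calc (a + b) ^ 2 = a ^ 2 + b ^ 2 + 2 * a * b := by ring
    _ ≤ a ^ 2 + b ^ 2 + (ε * a ^ 2 + ε⁻¹ * b ^ 2) := by gcongr; exact two_mul_le_add_mul_sq hε
    _ = (1 + ε) * a ^ 2 + (1 + 1 / ε) * b ^ 2 := by ring

lemma le_of_sq_le_mul_self {x y : ℝ} (hx : 0 ≤ x) (hy : 0 ≤ y) (h : x ^ 2 ≤ y * x) : x ≤ y := by
  rcases hx.eq_or_lt with rfl | hpos
  · exact hy
  · exact le_of_mul_le_mul_right (by simpa [sq] using h) hpos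

section ErrorMajorant

variable {L W : Type*} [NormedAddCommGroup L] [InnerProductSpace ℝ L]
  [NormedAddCommGroup W] [InnerProductSpace ℝ W]
  (grad : L →ₗ[ℝ] W) (dvg : W →ₗ[ℝ] L)

lemma norm_le_sqrt_mul_norm_grad {c : ℝ} (hc : 0 ≤ c) (hF : ∀ w : L, ‖w‖ ^ 2 ≤ c * ‖grad w‖ ^ 2)
    (w : L) : ‖w‖ ≤ √c * ‖grad w‖ := by
  rw [← Real.sqrt_sq (norm_nonneg (grad w)), ← Real.sqrt_mul hc]
  exact Real.le_sqrt_of_sq_le (hF w)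

lemma inner_grad_sub_eq {f u v : L} {z : W}
    (hweak : ∀ φ : L, ⟪grad u, grad φ⟫ = ⟪f, φ⟫)
    (hibp : ∀ φ : L, ⟪z, grad φ⟫ = -⟪dvg z, φ⟫) (φ : L) :
    ⟪grad (v - u), grad φ⟫ = ⟪grad v + z, grad φ⟫ + ⟪dvg z - f, φ⟫ := by
  rw [map_sub, inner_sub_left, inner_add_left, inner_sub_left, hweak, hibp]
  ring

lemma norm_grad_sub_le {c : ℝ} (hc : 0 ≤ c) (hF : ∀ w : L, ‖w‖ ^ 2 ≤ c * ‖grad w‖ ^ 2)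
    {f u v : L} {z : W}
    (hweak : ∀ φ : L, ⟪grad u, grad φ⟫ = ⟪f, φ⟫)
    (hibp : ∀ φ : L, ⟪z, grad φ⟫ = -⟪dvg z, φ⟫) :
    ‖grad (v - u)‖ ≤ ‖grad v + z‖ + √c * ‖dvg z - f‖ := by
  set w := v - u
  refine le_of_sq_le_mul_self (norm_nonneg _) (by positivity) ?_
  calc ‖grad w‖ ^ 2 = ⟪grad v + z, grad w⟫ + ⟪dvg z - f, w⟫ := by
        rw [← real_inner_self_eq_norm_sq, inner_grad_sub_eq grad dvg hweak hibp]
    _ ≤ ‖grad v + z‖ * ‖grad w‖ + ‖dvg z - f‖ * (√c * ‖grad w‖) := by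
        gcongr
        · exact real_inner_le_norm _ _
        · exact (real_inner_le_norm _ _).trans
            (by gcongr; exact norm_le_sqrt_mul_norm_grad grad hc hF w)
    _ = (‖grad v + z‖ + √c * ‖dvg z - f‖) * ‖grad w‖ := by ring

end ErrorMajorant

/-- The Repin–Frolov a posteriori error majorant (2.5) for the Poisson equation,
σ ≡ 0, A = I, homogeneous Dirichlet conditions.  Abstract formalization with
the Friedrichs inequality as a hypothesis. -/
theorem stmt_5 {L W : Type*} [NormedAddCommGroup L] [InnerProductSpace ℝ L]
    [NormedAddCommGroup W] [InnerProductSpace ℝ W]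
    (grad : L →ₗ[ℝ] W) (dvg : W →ₗ[ℝ] L)
    (cΩ : ℝ) (hcΩ : 0 ≤ cΩ)
    -- Friedrichs inequality on H¹₀(Ω)
    (hFriedrichs : ∀ w : L, ‖w‖ ^ 2 ≤ cΩ * ‖grad w‖ ^ 2)
    (f u v : L) (z : W)
    -- u is the weak solution of −Δu = f
    (hweak : ∀ φ : L, (inner ℝ (grad u) (grad φ) : ℝ) = (inner ℝ f φ : ℝ))
    -- integration by parts for z ∈ H(Ω, div)
    (hibp : ∀ φ : L, (inner ℝ z (grad φ) : ℝ) = -(inner ℝ (dvg z) φ : ℝ)) :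
    ∀ ε : ℝ, 0 < ε →
      ‖grad (v - u)‖ ^ 2 ≤ (1 + ε) * ‖grad v + z‖ ^ 2 +
        cΩ * (1 + 1 / ε) * ‖dvg z - f‖ ^ 2 := by
  intro ε hε
  calc ‖grad (v - u)‖ ^ 2 ≤ (‖grad v + z‖ + √cΩ * ‖dvg z - f‖) ^ 2 := by
        gcongr; exact norm_grad_sub_le grad dvg hcΩ hFriedrichs hweak hibp
    _ ≤ (1 + ε) * ‖grad v + z‖ ^ 2 + (1 + 1 / ε) * (√cΩ * ‖dvg z - f‖) ^ 2 :=
        add_sq_le_one_add_mul_sq_add hε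
    _ = (1 + ε) * ‖grad v + z‖ ^ 2 + cΩ * (1 + 1 / ε) * ‖dvg z - f‖ ^ 2 := by
        rw [mul_pow, Real.sq_sqrt hcΩ]; ring
end

section
/- Let V be a subspace of H¹₀(Ω) with V ⊂ H²(Ω)-smooth functions (so that z := −A∇v has div z ∈ L²(Ω) for v ∈ V), let u ∈ H¹₀(Ω) be the weak solution of −div(A∇u) + σu = f, and let u_G ∈ V be the Galerkin solution: a(u_G, ψ) + σ(u_G, ψ) = (f, ψ) for all ψ ∈ V. Let Q be the L²-orthogonal projection onto V, and suppose σ* > 0 satisfies ‖u−u_G‖²_A ≥ σ*·‖u − Qu‖²_{L²(Ω)}. Then for 0 ≤ σ ≤ σ*: ‖u_G − u‖²_A + σ‖u_G − u‖²_{L²(Ω)} ≤ (2/(1+σ/σ*))·(1/σ*)·‖f − σu_G + div(A∇u_G)‖²_{L²(Ω)}. -/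
/-!
Write `e = u - u_G` and `r = f - σ u_G + div(A∇u_G)` for the residual. Integrating by parts,
`(r, φ) = a(e, φ) + σ (e, φ)` for every `φ`, and `r` is orthogonal to `V` by Galerkin
orthogonality. Testing with `φ = e` and using `e - (u - Qu) = Qu - u_G ∈ V`, the energy error
`S = ‖e‖²_A + σ‖e‖²` equals `(r, u - Qu) ≤ ‖r‖ ‖u - Qu‖`, while the critical-value inequality gives
`σ* ‖u - Qu‖² ≤ S`. Together `S ≤ ‖r‖² / σ*`, and `2 / (1 + σ/σ*) ≥ 1` for `σ ≤ σ*`.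
-/

open scoped RealInnerProductSpace

section

variable {H : Type*} [NormedAddCommGroup H] [InnerProductSpace ℝ H]

def bilinFormOfSymm (a : H → H → ℝ) (hsymm : ∀ v w, a v w = a w v)
    (habil : ∀ (c : ℝ) (v v' w : H), a (c • v + v') w = c * a v w + a v' w) :
    LinearMap.BilinForm ℝ H :=
  have zero_left : ∀ w, a 0 w = 0 := fun w => by
    have h := habil 1 0 0 w
    simp only [smul_zero, add_zero, one_mul] at h
    linarith
  have add_left : ∀ v v' w, a (v + v') w = a v w + a v' w := fun v v' w => by
    simpa using habil 1 v v' w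
  have smul_left : ∀ (c : ℝ) v w, a (c • v) w = c • a v w := fun c v w => by
    simpa [zero_left] using habil c v 0 w
  LinearMap.mk₂ ℝ a add_left smul_left
    (fun v w w' => by rw [hsymm, add_left, hsymm, hsymm v w'])
    (fun c v w => by rw [hsymm, smul_left, hsymm])

theorem le_sq_div_of_le_mul_of_mul_sq_le {S r t σs : ℝ} (hσs : 0 < σs) (hS : S ≤ r * t)
    (ht : σs * t ^ 2 ≤ S) : S ≤ r ^ 2 / σs := by
  -- `0 ≤ σs t² ≤ S`, so `σs S² ≤ σs (r t)² ≤ r² S`; divide by `S`, or `S = 0`.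
  rw [le_div_iff₀ hσs]
  nlinarith [sq_nonneg (r * t - S), sq_nonneg t, sq_nonneg (σs * t - r)]

theorem one_le_two_div_one_add_div {σ σs : ℝ} (hσ0 : 0 ≤ σ) (hσs : 0 < σs) (hσσ : σ ≤ σs) :
    1 ≤ 2 / (1 + σ / σs) := by
  have hq : σ / σs ≤ 1 := (div_le_one hσs).mpr hσσ
  rw [le_div_iff₀ (by positivity)]
  linarith

theorem energy_le_norm_residual_sq_div (a : H → H → ℝ) (V : Submodule ℝ H) {σ σs : ℝ}
    (hσ0 : 0 ≤ σ) (hσs : 0 < σs) {e r w : H}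
    (hres : ∀ φ, ⟪r, φ⟫ = a e φ + σ * ⟪e, φ⟫) (horth : ∀ ψ ∈ V, ⟪r, ψ⟫ = 0)
    (hw : e - w ∈ V) (hcrit : σs * ‖w‖ ^ 2 ≤ a e e) :
    a e e + σ * ‖e‖ ^ 2 ≤ ‖r‖ ^ 2 / σs := by
  have henergy : a e e + σ * ‖e‖ ^ 2 = ⟪r, w⟫ := by
    have hsplit : ⟪r, e⟫ = ⟪r, w⟫ := by
      rw [← sub_eq_zero, ← inner_sub_right, horth _ hw]
    rw [← hsplit, hres, real_inner_self_eq_norm_sq]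
  refine le_sq_div_of_le_mul_of_mul_sq_le (t := ‖w‖) hσs ?_ ?_
  · exact henergy ▸ real_inner_le_norm r w
  · linarith [mul_nonneg hσ0 (sq_nonneg ‖e‖)]

end

theorem stmt_18_general {H : Type*} [NormedAddCommGroup H] [InnerProductSpace ℝ H]
    (a : H → H → ℝ) (hsymm : ∀ v w, a v w = a w v)
    (habil : ∀ (c : ℝ) (v v' w : H), a (c • v + v') w = c * a v w + a v' w)
    (V : Submodule ℝ H) (Lap : H →ₗ[ℝ] H)
    -- integration by parts: a(v,φ) = −(div(A∇v), φ) for smooth v ∈ V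
    (hibp : ∀ v ∈ V, ∀ φ : H, a v φ = -(inner ℝ (Lap v) φ : ℝ))
    (σ σs : ℝ) (hσ0 : 0 ≤ σ) (hσs : 0 < σs) (hσσ : σ ≤ σs)
    (f u uG : H)
    -- u is the weak solution of −div(A∇u) + σu = f
    (hweak : ∀ φ : H, a u φ + σ * (inner ℝ u φ : ℝ) = (inner ℝ f φ : ℝ))
    -- uG is the Galerkin solution in V
    (hG : uG ∈ V ∧ ∀ ψ ∈ V, a uG ψ + σ * (inner ℝ uG ψ : ℝ) = (inner ℝ f ψ : ℝ))
    -- Q is the L²-orthogonal projection onto V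
    (Q : H → H) (hQmem : ∀ φ, Q φ ∈ V)
    -- modified critical-value inequality (3.2)
    (hcrit : σs * ‖u - Q u‖ ^ 2 ≤ a (u - uG) (u - uG)) :
    a (uG - u) (uG - u) + σ * ‖uG - u‖ ^ 2 ≤
      (2 / (1 + σ / σs)) * (1 / σs) * ‖f - σ • uG + Lap uG‖ ^ 2 := by
  obtain ⟨huG, hGal⟩ := hG
  let B := bilinFormOfSymm a hsymm habil
  have hinner : ∀ φ, ⟪f - σ • uG + Lap uG, φ⟫ = ⟪f, φ⟫ - σ * ⟪uG, φ⟫ - a uG φ := fun φ => by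
    rw [inner_add_left, inner_sub_left, real_inner_smul_left, hibp uG huG]
    ring
  have hres : ∀ φ, ⟪f - σ • uG + Lap uG, φ⟫ = a (u - uG) φ + σ * ⟪u - uG, φ⟫ := fun φ => by
    have hsub : a (u - uG) φ = a u φ - a uG φ := B.map_sub₂ u uG φ
    rw [hinner, ← hweak φ, inner_sub_left, hsub]
    ring
  have horth : ∀ ψ ∈ V, ⟪f - σ • uG + Lap uG, ψ⟫ = 0 := fun ψ hψ => by
    rw [hinner, ← hGal ψ hψ]
    ring
  have hbound := energy_le_norm_residual_sq_div a V hσ0 hσs hres horth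
    (by simpa using V.sub_mem (hQmem u) huG) hcrit
  have hswap : a (uG - u) (uG - u) = a (u - uG) (u - uG) := by
    change B (uG - u) (uG - u) = B (u - uG) (u - uG)
    rw [← neg_sub u uG, LinearMap.map_neg₂, map_neg, neg_neg]
  calc a (uG - u) (uG - u) + σ * ‖uG - u‖ ^ 2
      ≤ 1 * (1 / σs) * ‖f - σ • uG + Lap uG‖ ^ 2 := by
        rw [hswap, norm_sub_rev, one_mul, one_div_mul_eq_div]; exact hbound
    _ ≤ (2 / (1 + σ / σs)) * (1 / σs) * ‖f - σ • uG + Lap uG‖ ^ 2 := by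
        gcongr
        exact one_le_two_div_one_add_div hσ0 hσs hσσ

/-- Bound (3.9) of Theorem 3.1 for smooth Galerkin solutions: with the test flux
z_G = −A∇u_G the diffusion term vanishes and only the residual term remains.
Abstract formalization: `H` plays the role of `L²(Ω)` containing `H¹₀(Ω)`,
`a` is the energy form a(v,w) = ∫ ∇v·A∇w, `V` the smooth Galerkin subspace,
`Lap v = div(A∇v)` (well defined on V), `Q` the L²-orthogonal projection on V. -/
theorem stmt_18 {H : Type*} [NormedAddCommGroup H] [InnerProductSpace ℝ H]
    (a : H → H → ℝ) (hsymm : ∀ v w, a v w = a w v) (hpos : ∀ v, 0 ≤ a v v)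
    (habil : ∀ (c : ℝ) (v v' w : H), a (c • v + v') w = c * a v w + a v' w)
    (V : Submodule ℝ H) (Lap : H →ₗ[ℝ] H)
    -- integration by parts: a(v,φ) = −(div(A∇v), φ) for smooth v ∈ V
    (hibp : ∀ v ∈ V, ∀ φ : H, a v φ = -(inner ℝ (Lap v) φ : ℝ))
    (σ σs : ℝ) (hσ0 : 0 ≤ σ) (hσs : 0 < σs) (hσσ : σ ≤ σs)
    (f u uG : H)
    -- u is the weak solution of −div(A∇u) + σu = f
    (hweak : ∀ φ : H, a u φ + σ * (inner ℝ u φ : ℝ) = (inner ℝ f φ : ℝ))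
    -- uG is the Galerkin solution in V
    (hG : uG ∈ V ∧ ∀ ψ ∈ V, a uG ψ + σ * (inner ℝ uG ψ : ℝ) = (inner ℝ f ψ : ℝ))
    -- Q is the L²-orthogonal projection onto V
    (Q : H → H) (hQmem : ∀ φ, Q φ ∈ V)
    (hQorth : ∀ φ : H, ∀ ψ ∈ V, (inner ℝ (φ - Q φ) ψ : ℝ) = 0)
    -- modified critical-value inequality (3.2)
    (hcrit : σs * ‖u - Q u‖ ^ 2 ≤ a (u - uG) (u - uG)) :
    a (uG - u) (uG - u) + σ * ‖uG - u‖ ^ 2 ≤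
      (2 / (1 + σ / σs)) * (1 / σs) * ‖f - σ • uG + Lap uG‖ ^ 2 :=
  stmt_18_general a hsymm habil V Lap hibp σ σs hσ0 hσs hσσ f u uG hweak hG Q hQmem hcrit
end
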